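/- arXiv:2603.26492 — 3 statements merged into one kernel-verified Lean document; each statement's English description precedes it below -/
import Mathlib

section
/- The localization of the ring R = 𝔽₂[ρ, r₀, r₁, r₂, …]/(rᵢ² − ρ·rᵢ₊₁ : i ∈ ℕ) away from the element ρ̄ is isomorphic, as a commutative ring, to the polynomial ring in one variable over the Laurent polynomial ring 𝔽₂[t, t⁻¹]. More precisely, the 𝔽₂-algebra homomorphism (𝔽₂[t, t⁻¹])[X] → R[ρ̄⁻¹] sending t to the image of ρ̄ (which is invertible in the localization) and X to the image of r̄₀ is bijective. -/
open MvPolynomial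

noncomputable section

/-- The polynomial ring `𝔽₂[ρ, r₀, r₁, …]`: variable `none` is `ρ`, `some i` is `rᵢ`. -/
abbrev P : Type := MvPolynomial (Option ℕ) (ZMod 2)

/-- The ideal generated by the relations `rᵢ² − ρ·rᵢ₊₁`, `i ∈ ℕ`. -/
def relIdeal : Ideal P :=
  Ideal.span (Set.range fun i : ℕ => (X (some i) : P) ^ 2 - X none * X (some (i + 1)))

/-- `R = 𝔽₂[ρ, r₀, r₁, …]/(rᵢ² − ρ·rᵢ₊₁ : i ∈ ℕ)`. -/
abbrev R : Type := P ⧸ relIdeal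

/-- The image `ρ̄` of `ρ` in `R`. -/
def ρbar : R := Ideal.Quotient.mk relIdeal (X none)

/-- The image `r̄ᵢ` of `rᵢ` in `R`. -/
def rbar (i : ℕ) : R := Ideal.Quotient.mk relIdeal (X (some i))


/-! Once `ρ̄` is inverted, the relations force `r̄ᵢ = ρ̄^(1 - 2^i) r̄₀^(2^i)`, so the
localization is generated by `ρ̄^(±1)` and `r̄₀`. Conversely, `ρ ↦ t`, `rᵢ ↦ t^(1 - 2^i) X^(2^i)`
satisfies the relations in `𝔽₂[t, t⁻¹][X]`, and the induced map inverts the evaluation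
`t ↦ ρ̄`, `X ↦ r̄₀`. -/

open scoped Polynomial LaurentPolynomial
open LaurentPolynomial (T)

namespace LaurentPolynomial

variable {k A : Type*} [CommRing k] [CommRing A] [Algebra k A]

def aevalUnit (u : Aˣ) : k[T;T⁻¹] →ₐ[k] A :=
  { eval₂ (algebraMap k A) u with
    commutes' := fun c => by simp [← C_eq_algebraMap] }

@[simp]
theorem aevalUnit_T (u : Aˣ) (n : ℤ) : aevalUnit u (T n : k[T;T⁻¹]) = ↑(u ^ n) :=
  eval₂_T _ _ n

theorem algHom_ext_T_one {f g : k[T;T⁻¹] →ₐ[k] A} (h : f (T 1) = g (T 1)) : f = g := by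
  have : IsScalarTower k k[X] k[T;T⁻¹] := .of_algebraMap_eq' (by
    ext c; simp [algebraMap_eq_toLaurent, ← C_eq_algebraMap])
  refine IsLocalization.algHom_ext (Submonoid.powers (Polynomial.X : k[X])) ?_
  refine Polynomial.algHom_ext ?_
  change f (algebraMap k[X] k[T;T⁻¹] Polynomial.X) = g (algebraMap k[X] k[T;T⁻¹] Polynomial.X)
  rwa [algebraMap_eq_toLaurent, Polynomial.toLaurent_X]

end LaurentPolynomial

section RelSeq

variable {M : Type*} [CommMonoid M]

def relSeq (u : Mˣ) (x : M) (i : ℕ) : M := ↑(u ^ (1 - 2 ^ i : ℤ)) * x ^ 2 ^ i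

theorem relSeq_sq (u : Mˣ) (x : M) (i : ℕ) : relSeq u x i ^ 2 = u * relSeq u x (i + 1) := by
  have : (1 - 2 ^ i : ℤ) * (2 : ℕ) = 1 + (1 - 2 ^ (i + 1)) := by push_cast; ring
  simp only [relSeq, mul_pow, ← Units.val_pow_eq_pow_val, ← zpow_natCast, ← zpow_mul, ← pow_mul]
  rw [this, zpow_add, zpow_one, Units.val_mul, mul_assoc, ← pow_succ]

@[simp]
theorem relSeq_zero (u : Mˣ) (x : M) : relSeq u x 0 = x := by
  simp [relSeq]

theorem pow_two_pow_eq_mul_pow {ρ : M} {r : ℕ → M} (h : ∀ i, r i ^ 2 = ρ * r (i + 1)) (i : ℕ) :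
    r 0 ^ 2 ^ i = r i * ρ ^ (2 ^ i - 1) := by
  induction i with
  | zero => simp
  | succ i ih =>
    have : 1 ≤ 2 ^ i := Nat.one_le_two_pow
    calc r 0 ^ 2 ^ (i + 1) = (r i * ρ ^ (2 ^ i - 1)) ^ 2 := by rw [← ih, ← pow_mul, pow_succ]
      _ = r (i + 1) * ρ ^ (2 ^ (i + 1) - 1) := by
        have hexp : 2 ^ (i + 1) - 1 = (2 ^ i - 1) * 2 + 1 := by rw [pow_succ]; omega
        rw [mul_pow, h, ← pow_mul, hexp, pow_succ']
        ac_rfl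

theorem map_relSeq {N F : Type*} [CommMonoid N] [FunLike F M N] [MonoidHomClass F M N] (f : F)
    (u : Mˣ) (x : M) (i : ℕ) : f (relSeq u x i) = relSeq (Units.map f u) (f x) i := by
  simp only [relSeq, map_mul, map_pow, ← map_zpow, Units.coe_map, MonoidHom.coe_coe]

theorem eq_relSeq {u : Mˣ} {r : ℕ → M} (h : ∀ i, r i ^ 2 = u * r (i + 1)) (i : ℕ) :
    r i = relSeq u (r 0) i := by
  have hcancel : u ^ (1 - 2 ^ i : ℤ) * u ^ (2 ^ i - 1) = 1 := by
    rw [← zpow_natCast, ← zpow_add, Nat.cast_sub Nat.one_le_two_pow]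
    simp
  rw [relSeq, pow_two_pow_eq_mul_pow h, ← Units.val_pow_eq_pow_val, mul_left_comm,
    ← Units.val_mul, hcancel, Units.val_one, mul_one]

end RelSeq

theorem rbar_sq (i : ℕ) : rbar i ^ 2 = ρbar * rbar (i + 1) := by
  have h : Ideal.Quotient.mk relIdeal ((X (some i) : P) ^ 2 - X none * X (some (i + 1))) = 0 :=
    Ideal.Quotient.eq_zero_iff_mem.2 (Ideal.subset_span ⟨i, rfl⟩)
  rwa [map_sub, map_pow, map_mul, sub_eq_zero] at h

section UniversalProperty

variable {A : Type*} [CommRing A] [Algebra (ZMod 2) A]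

def liftR (ρ : A) (r : ℕ → A) (h : ∀ i, r i ^ 2 = ρ * r (i + 1)) : R →ₐ[ZMod 2] A :=
  Ideal.Quotient.liftₐ relIdeal (aeval fun v => v.elim ρ r) fun _ ha => by
    have hle : relIdeal ≤ RingHom.ker (aeval (fun v => v.elim ρ r) : P →ₐ[ZMod 2] A) :=
      Ideal.span_le.2 <| by
        rintro _ ⟨i, rfl⟩
        simp [h i]
    exact RingHom.mem_ker.1 (hle ha)

@[simp]
theorem liftR_ρbar (ρ : A) (r : ℕ → A) (h) : liftR ρ r h ρbar = ρ :=
  aeval_X _ none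

@[simp]
theorem liftR_rbar (ρ : A) (r : ℕ → A) (h) (i : ℕ) : liftR ρ r h (rbar i) = r i :=
  aeval_X _ (some i)

theorem algHom_ext_away_ρbar {f g : Localization.Away ρbar →ₐ[ZMod 2] A}
    (hρ : f (algebraMap R _ ρbar) = g (algebraMap R _ ρbar))
    (hr : ∀ i, f (algebraMap R _ (rbar i)) = g (algebraMap R _ (rbar i))) : f = g := by
  refine IsLocalization.algHom_ext (Submonoid.powers ρbar) (Ideal.Quotient.algHom_ext _ ?_)
  refine MvPolynomial.algHom_ext fun v => ?_
  cases v with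
  | none => exact hρ
  | some i => exact hr i

end UniversalProperty

def ρunit : (Localization.Away ρbar)ˣ := (IsLocalization.Away.algebraMap_isUnit ρbar).unit

def tUnit : (LaurentPolynomial (ZMod 2))[X]ˣ :=
  ((LaurentPolynomial.isUnit_T 1).map Polynomial.C).unit

def toAway : (LaurentPolynomial (ZMod 2))[X] →ₐ[ZMod 2] Localization.Away ρbar :=
  Polynomial.aevalTower (LaurentPolynomial.aevalUnit ρunit) (algebraMap R _ (rbar 0))

def ofAway : Localization.Away ρbar →ₐ[ZMod 2] (LaurentPolynomial (ZMod 2))[X] :=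
  IsLocalization.Away.liftAlgHom ρbar
    (f := liftR tUnit (relSeq tUnit Polynomial.X) (relSeq_sq _ _)) (by simp)

theorem toAway_C_T (n : ℤ) : toAway (Polynomial.C (T n)) = ↑(ρunit ^ n) := by
  simp [toAway]

theorem toAway_X : toAway Polynomial.X = algebraMap R _ (rbar 0) := by
  simp [toAway]

theorem ofAway_ρbar : ofAway (algebraMap R _ ρbar) = tUnit := by
  simp [ofAway]

theorem ofAway_rbar (i : ℕ) : ofAway (algebraMap R _ (rbar i)) = relSeq tUnit Polynomial.X i := by
  simp [ofAway]

theorem toAway_comp_ofAway : toAway.comp ofAway = AlgHom.id (ZMod 2) _ := by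
  have hunit : Units.map toAway tUnit = ρunit := by
    ext
    simp [tUnit, ρunit, toAway_C_T]
  have hrel (i : ℕ) : algebraMap R (Localization.Away ρbar) (rbar i) ^ 2 =
      ρunit * algebraMap R _ (rbar (i + 1)) := by
    rw [← map_pow, rbar_sq, map_mul]
    rfl
  refine algHom_ext_away_ρbar ?_ fun i => ?_
  · simp [ofAway_ρbar, tUnit, toAway_C_T, ρunit]
  · rw [AlgHom.comp_apply, ofAway_rbar, map_relSeq, hunit, toAway_X, AlgHom.id_apply]
    exact (eq_relSeq hrel i).symm

theorem ofAway_comp_toAway : ofAway.comp toAway = AlgHom.id (ZMod 2) _ := by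
  refine Polynomial.algHom_ext' (LaurentPolynomial.algHom_ext_T_one ?_) ?_
  · simp [toAway_C_T, ρunit, ofAway_ρbar, tUnit]
  · simp [toAway_X, ofAway_rbar]

/-- The `𝔽₂`-algebra homomorphism `(𝔽₂[t, t⁻¹])[X] → R[ρ̄⁻¹]` sending `t` to the image of `ρ̄`
and `X` to the image of `r̄₀` is bijective; in particular the localization of `R` away from `ρ̄`
is isomorphic to the polynomial ring in one variable over the Laurent polynomial ring
`𝔽₂[t, t⁻¹]`. -/
theorem stmt1 :
    ∃ φ : Polynomial (LaurentPolynomial (ZMod 2)) →ₐ[ZMod 2] Localization.Away ρbar,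
      φ (Polynomial.C (LaurentPolynomial.T 1)) =
          algebraMap R (Localization.Away ρbar) ρbar ∧
      φ Polynomial.X = algebraMap R (Localization.Away ρbar) (rbar 0) ∧
      Function.Bijective φ :=
  ⟨toAway, by simp [toAway_C_T, ρunit], toAway_X,
    (AlgEquiv.ofAlgHom _ _ toAway_comp_ofAway ofAway_comp_toAway).bijective⟩
end
end

section
/- In the ring R = 𝔽₂[ρ, r₀, r₁, r₂, …]/(rᵢ² − ρ·rᵢ₊₁ : i ∈ ℕ), the image ρ̄ of the variable ρ is a nonzerodivisor; equivalently, multiplication by ρ̄ is an injective map R → R. -/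
open MvPolynomial

noncomputable section

/-!
Build an `𝔽₂`-linear "division by `ρ`" map `divRho : P → R`. On a monomial it divides out `ρ`
if `ρ` occurs; otherwise it rewrites the first square `rᵢ²` as `ρ rᵢ₊₁` and divides out that
`ρ`; otherwise it is `0`. Then `divRho (ρ p) = p̄`, and `divRho` kills the relation ideal, the
only point being that the result does not depend on which square is used: the choices `rᵢ²` and
`rⱼ²` both lead to `ρ rᵢ₊₁ rⱼ₊₁` times the rest. Hence `ρ p ∈ I` forces `p̄ = 0`.
-/

namespace RelIdeal

local notation "π" => Ideal.Quotient.mk relIdeal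

lemma relation_mem (i : ℕ) : (X (some i) : P) ^ 2 - X none * X (some (i + 1)) ∈ relIdeal :=
  Ideal.subset_span ⟨i, rfl⟩

lemma mk_monomial_add_single_two (ν : Option ℕ →₀ ℕ) (i : ℕ) :
    π (monomial (ν + Finsupp.single (some i) 2) 1) =
      π (monomial (ν + Finsupp.single none 1 + Finsupp.single (some (i + 1)) 1) 1) := by
  rw [Ideal.Quotient.eq]
  have h : (monomial (ν + Finsupp.single (some i) 2) 1 : P)
      - monomial (ν + Finsupp.single none 1 + Finsupp.single (some (i + 1)) 1) 1
      = monomial ν 1 * ((X (some i) : P) ^ 2 - X none * X (some (i + 1))) := by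
    rw [mul_sub, X_pow_eq_monomial, X, X, monomial_mul, ← mul_assoc, monomial_mul, monomial_mul,
      one_mul, one_mul]
  rw [h]
  exact Ideal.mul_mem_left _ _ (relation_mem i)

lemma mk_monomial_swap_squares (κ : Option ℕ →₀ ℕ) (i j : ℕ) :
    π (monomial (κ + Finsupp.single (some i) 2 + Finsupp.single (some (j + 1)) 1) 1) =
      π (monomial (κ + Finsupp.single (some j) 2 + Finsupp.single (some (i + 1)) 1) 1) := by
  rw [add_right_comm κ (Finsupp.single (some i) 2), add_right_comm κ (Finsupp.single (some j) 2),
    mk_monomial_add_single_two, mk_monomial_add_single_two]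
  congr 3
  abel

open scoped Classical in
def divRhoMonomial (n : Option ℕ →₀ ℕ) : R :=
  if n none ≠ 0 then π (monomial (n - Finsupp.single none 1) 1)
  else if h : ∃ i, 2 ≤ n (some i) then
    π (monomial (n - Finsupp.single (some (Nat.find h)) 2
      + Finsupp.single (some (Nat.find h + 1)) 1) 1)
  else 0

lemma divRhoMonomial_single_none_add (n : Option ℕ →₀ ℕ) :
    divRhoMonomial (Finsupp.single none 1 + n) = π (monomial n 1) := by
  rw [divRhoMonomial, if_pos (by simp), add_tsub_cancel_left]

lemma divRhoMonomial_add_single_two (n : Option ℕ →₀ ℕ) (i : ℕ) :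
    divRhoMonomial (n + Finsupp.single (some i) 2) =
      π (monomial (n + Finsupp.single (some (i + 1)) 1) 1) := by
  by_cases hρ : n none = 0
  · have hsq : ∃ k, 2 ≤ (n + Finsupp.single (some i) 2 : Option ℕ →₀ ℕ) (some k) := ⟨i, by simp⟩
    rw [divRhoMonomial, if_neg (by simpa using hρ), dif_pos hsq]
    have hj := Nat.find_spec hsq
    generalize Nat.find hsq = j at hj ⊢
    obtain rfl | hji := eq_or_ne j i
    · rw [add_tsub_cancel_right]
    have hle : Finsupp.single (some j) 2 ≤ n := by
      rw [Finsupp.single_le_iff]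
      simpa [Finsupp.single_apply, hji.symm] using hj
    obtain ⟨κ, rfl⟩ := exists_add_of_le hle
    rw [add_comm (Finsupp.single _ 2) κ, add_right_comm, add_tsub_cancel_right,
      mk_monomial_swap_squares]
  · have hle : Finsupp.single none 1 ≤ n := by
      rw [Finsupp.single_le_iff]
      omega
    obtain ⟨κ, rfl⟩ := exists_add_of_le hle
    rw [add_assoc, divRhoMonomial_single_none_add, add_comm (Finsupp.single none 1) κ,
      mk_monomial_add_single_two, add_assoc]

def divRho : P →ₗ[ZMod 2] R :=
  (basisMonomials (Option ℕ) (ZMod 2)).constr (ZMod 2) divRhoMonomial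

lemma divRho_monomial_one (n : Option ℕ →₀ ℕ) : divRho (monomial n 1) = divRhoMonomial n :=
  (basisMonomials (Option ℕ) (ZMod 2)).constr_basis (ZMod 2) divRhoMonomial n

lemma divRho_X_none_mul (p : P) : divRho (X none * p) = π p := by
  suffices divRho ∘ₗ LinearMap.mulLeft (ZMod 2) (X none) =
      (Ideal.Quotient.mkₐ (ZMod 2) relIdeal).toLinearMap from LinearMap.congr_fun this p
  refine (basisMonomials (Option ℕ) (ZMod 2)).ext fun n => ?_
  simp only [coe_basisMonomials, LinearMap.coe_comp, Function.comp_apply, LinearMap.mulLeft_apply,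
    AlgHom.toLinearMap_apply, Ideal.Quotient.mkₐ_eq_mk]
  rw [X, monomial_mul, one_mul, divRho_monomial_one, divRhoMonomial_single_none_add]

lemma divRho_mul_relation (p : P) (i : ℕ) :
    divRho (p * ((X (some i) : P) ^ 2 - X none * X (some (i + 1)))) = 0 := by
  suffices divRho ∘ₗ LinearMap.mulRight (ZMod 2) ((X (some i) : P) ^ 2 - X none * X (some (i + 1)))
      = 0 from LinearMap.congr_fun this p
  refine (basisMonomials (Option ℕ) (ZMod 2)).ext fun n => ?_
  simp only [coe_basisMonomials, LinearMap.coe_comp, Function.comp_apply,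
    LinearMap.mulRight_apply, LinearMap.zero_apply]
  have hρ : (monomial n 1 : P) * (X none * X (some (i + 1)))
      = X none * monomial (n + Finsupp.single (some (i + 1)) 1) 1 := by
    rw [mul_left_comm]
    congr 1
    rw [X, monomial_mul, one_mul]
  rw [mul_sub, map_sub, X_pow_eq_monomial, monomial_mul, mul_one, hρ, divRho_X_none_mul,
    divRho_monomial_one, divRhoMonomial_add_single_two, sub_self]

lemma divRho_eq_zero_of_mem {f : P} (hf : f ∈ relIdeal) : divRho f = 0 := by
  obtain ⟨c, rfl⟩ := Finsupp.mem_ideal_span_range_iff_exists_finsupp.mp hf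
  rw [map_finsuppSum]
  exact Finset.sum_eq_zero fun i _ => divRho_mul_relation (c i) i

lemma eq_zero_of_ρbar_mul_eq_zero (x : R) (hx : ρbar * x = 0) : x = 0 := by
  obtain ⟨p, rfl⟩ := Ideal.Quotient.mk_surjective x
  rw [← divRho_X_none_mul]
  exact divRho_eq_zero_of_mem (Ideal.Quotient.eq_zero_iff_mem.mp hx)

end RelIdeal

/-- `ρ̄` is a nonzerodivisor in `R`: multiplication by `ρ̄` is injective. -/
theorem stmt3 : ρbar ∈ nonZeroDivisors R ∧ Function.Injective (fun x : R => ρbar * x) := by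
  have h : IsLeftRegular ρbar :=
    isLeftRegular_iff_right_eq_zero_of_mul.mpr RelIdeal.eq_zero_of_ρbar_mul_eq_zero
  exact ⟨isRegular_iff_mem_nonZeroDivisors.mp (isLeftRegular_iff_isRegular.mp h), h⟩
end
end

section
/- Let m ≥ 2 be a natural number, set d := 2^{m−1} − 1 and dᵢ := 2^i − 1 for each i. For a finite subset T ⊆ {0, 1, …, m−2}, define v(T) := |T|·d − ∑_{i∈T} dᵢ ∈ ℤ. Then 0 ≤ v(T) ≤ d − 1 holds if and only if T = ∅ or T = {i} for some i with 1 ≤ i ≤ m−2; moreover v(∅) = 0, v({i}) = d − dᵢ for 1 ≤ i ≤ m−2, and the values 0, d − d₁, …, d − d_{m−2} are pairwise distinct. -/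
noncomputable section

/-- `d := 2^{m−1} − 1`. -/
def dd (m : ℕ) : ℤ := 2 ^ (m - 1) - 1

/-- `dᵢ := 2^i − 1`. -/
def ddi (i : ℕ) : ℤ := 2 ^ i - 1

/-- `v(T) := |T|·d − ∑_{i∈T} dᵢ`. -/
def v (m : ℕ) (T : Finset ℕ) : ℤ := (T.card : ℤ) * dd m - ∑ i ∈ T, ddi i

/-!
Writing `v(T) = |T|·2^{m−1} − ∑_{i∈T} 2^i` and using that a sum of distinct powers `2^i` with
`i < m − 1` is below `2^{m−1}` (binary expansion), one gets `v(T) > (|T| − 1)·2^{m−1}`. Hence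
`v(T) ≤ d − 1` forces `|T| ≤ 1`, and for `T = {i}` the value `2^{m−1} − 2^i` lies in `[0, d − 1]`
exactly when `2 ≤ 2^i`, i.e. `i ≥ 1`.
-/

lemma dd_sub_ddi (m i : ℕ) : dd m - ddi i = 2 ^ (m - 1) - 2 ^ i := by
  unfold dd ddi
  ring

lemma v_empty (m : ℕ) : v m ∅ = 0 := by
  simp [v]

lemma v_singleton (m i : ℕ) : v m {i} = dd m - ddi i := by
  simp [v]

lemma v_eq_card_mul_sub_sum_pow (m : ℕ) (T : Finset ℕ) :
    v m T = T.card * 2 ^ (m - 1) - ∑ i ∈ T, (2 : ℤ) ^ i := by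
  simp only [v, dd, ddi, Finset.sum_sub_distrib, Finset.sum_const, nsmul_eq_mul, mul_one]
  ring

lemma sum_two_pow_lt_of_subset_range {n : ℕ} {T : Finset ℕ} (hT : T ⊆ Finset.range n) :
    ∑ i ∈ T, (2 : ℤ) ^ i < 2 ^ n := by
  exact_mod_cast Nat.geomSum_lt le_rfl fun i hi ↦ Finset.mem_range.mp (hT hi)

lemma card_le_one_of_v_lt {m : ℕ} {T : Finset ℕ} (hT : T ⊆ Finset.range (m - 1))
    (hv : v m T < 2 ^ (m - 1)) : T.card ≤ 1 := by
  have hsum := sum_two_pow_lt_of_subset_range hT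
  rw [v_eq_card_mul_sub_sum_pow] at hv
  by_contra! hcard
  have : (2 : ℤ) ≤ T.card := by exact_mod_cast hcard
  nlinarith [pow_pos (two_pos : (0 : ℤ) < 2) (m - 1)]

lemma v_singleton_mem_Icc_iff {m i : ℕ} (hi : i < m - 1) :
    (0 ≤ v m {i} ∧ v m {i} ≤ dd m - 1) ↔ 1 ≤ i := by
  have hpow : (2 : ℤ) ^ i < 2 ^ (m - 1) := pow_lt_pow_right₀ one_lt_two hi
  have hge : (2 : ℤ) ≤ 2 ^ i ↔ 1 ≤ i := by
    simpa using (pow_le_pow_iff_right₀ one_lt_two : (2 : ℤ) ^ 1 ≤ 2 ^ i ↔ 1 ≤ i)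
  rw [v_singleton, dd_sub_ddi, dd, ← hge]
  constructor
  · rintro ⟨-, h⟩
    linarith
  · intro h
    constructor <;> linarith

/-- For `m ≥ 2` and `d = 2^{m−1} − 1`: a finite subset `T ⊆ {0, …, m−2}` satisfies
`0 ≤ v(T) ≤ d − 1` iff `T = ∅` or `T = {i}` with `1 ≤ i ≤ m−2`; moreover `v(∅) = 0`,
`v({i}) = d − dᵢ` for `1 ≤ i ≤ m−2`, and the values `0, d − d₁, …, d − d_{m−2}` are
pairwise distinct. -/
theorem stmt7 (m : ℕ) (hm : 2 ≤ m) :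
    (∀ T : Finset ℕ, T ⊆ Finset.range (m - 1) →
      ((0 ≤ v m T ∧ v m T ≤ dd m - 1) ↔
        (T = ∅ ∨ ∃ i : ℕ, 1 ≤ i ∧ i ≤ m - 2 ∧ T = {i}))) ∧
    v m ∅ = 0 ∧
    (∀ i : ℕ, 1 ≤ i → i ≤ m - 2 → v m {i} = dd m - ddi i) ∧
    (∀ i : ℕ, 1 ≤ i → i ≤ m - 2 → dd m - ddi i ≠ 0) ∧
    (∀ i j : ℕ, 1 ≤ i → i ≤ m - 2 → 1 ≤ j → j ≤ m - 2 →
      dd m - ddi i = dd m - ddi j → i = j) := by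
  refine ⟨fun T hT ↦ ⟨fun ⟨hv₀, hv⟩ ↦ ?_, ?_⟩, v_empty m, fun i _ _ ↦ v_singleton m i, ?_, ?_⟩
  · have hcard : T.card ≤ 1 := card_le_one_of_v_lt hT (by unfold dd at hv; linarith)
    obtain ⟨i, hTi⟩ := Finset.card_le_one_iff_subset_singleton.mp hcard
    obtain rfl | rfl := Finset.subset_singleton_iff.mp hTi
    · exact .inl rfl
    · have hi : i < m - 1 := Finset.mem_range.mp (hT (Finset.mem_singleton_self i))
      exact .inr ⟨i, (v_singleton_mem_Icc_iff hi).mp ⟨hv₀, hv⟩, by omega, rfl⟩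
  · rintro (rfl | ⟨i, hi, him, rfl⟩)
    · have : (2 : ℤ) ≤ 2 ^ (m - 1) := le_self_pow₀ one_le_two (by omega)
      rw [v_empty, dd]
      constructor <;> linarith
    · exact (v_singleton_mem_Icc_iff (by omega)).mpr hi
  · intro i _ hi
    rw [dd_sub_ddi, sub_ne_zero]
    exact (pow_lt_pow_right₀ one_lt_two (by omega)).ne'
  · intro i j _ _ _ _ h
    rw [dd_sub_ddi, dd_sub_ddi, sub_right_inj] at h
    exact pow_right_injective₀ two_pos (by norm_num) h
end
end
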